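/- Let X be a simplicial set, x an n-simplex of X with n ≥ 1, and 0 ≤ i ≤ n. Then i reduces x if and only if x = xδ_iσ_i (requiring i ≤ n−1) or x = xδ_iσ_{i−1} (requiring i ≥ 1). -/

import Mathlib

/-!
Write `x = y ε` with `ε : [n+1] ↠ [k]` and `k` least possible. Restriction along any map of `Δ`
cannot raise this least `k`, and restriction along `δᵢ` lowers it unless `δᵢ ≫ ε` is still
surjective, i.e. unless `ε` identifies `i` with `i + 1` or with `i - 1`. Then `ε` factors through
the matching `σⱼ`, and `δᵢ ≫ σⱼ = 𝟙` turns this into `x = x δᵢ σⱼ`. Conversely, `x = x δᵢ σⱼ`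
makes `x` a degeneracy of `x δᵢ`, so both have the same least `k`.
-/

open CategoryTheory Simplicial

namespace AufhebungSSet

/-- An `n`-simplex `x` of a simplicial set `X` is degenerate if it is the image of a
simplex of strictly smaller dimension under the action of an epimorphism of `Δ`. -/
def IsDegen (X : SSet) {n : ℕ} (x : X _⦋n⦌) : Prop :=
  ∃ m : ℕ, m < n ∧ ∃ ε : (⦋n⦌ : SimplexCategory) ⟶ ⦋m⦌,
    Function.Surjective ε.toOrderHom ∧ ∃ y : X _⦋m⦌, x = X.map ε.op y

/-- The degeneracy `dgn x = n - k`, where `k` is the least dimension from which `x`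
is the image of a simplex under the action of an epimorphism; by the Eilenberg–Zilber
lemma this is the dimension of the nondegenerate simplex of which `x` is a degeneracy. -/
noncomputable def dgn (X : SSet) {n : ℕ} (x : X _⦋n⦌) : ℕ :=
  n - sInf {k | ∃ ε : (⦋n⦌ : SimplexCategory) ⟶ ⦋k⦌,
    Function.Surjective ε.toOrderHom ∧ ∃ y : X _⦋k⦌, x = X.map ε.op y}

/-- `i` reduces `x` when `dgn (x δᵢ) = dgn x - 1`. -/
def Reduces (X : SSet) {n : ℕ} (i : Fin (n + 2)) (x : X _⦋n + 1⦌) : Prop :=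
  dgn X (X.map (SimplexCategory.δ i).op x) + 1 = dgn X x

/-- `i` properly reduces `x` when `x = x δᵢ σᵢ`. -/
def ProperlyReduces (X : SSet) {n : ℕ} (i : Fin (n + 1)) (x : X _⦋n + 1⦌) : Prop :=
  x = X.map (SimplexCategory.σ i).op (X.map (SimplexCategory.δ i.castSucc).op x)

/-- A `(K+2)`-sphere: a family `c₀, …, c_{K+2}` of `(K+1)`-simplices satisfying the
cycle equations `cⱼ δᵢ = cᵢ δ_{j-1}` for `i < j` (here reindexed: `c_{j+1} δᵢ = cᵢ δⱼ`
for `i ≤ j`). -/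
def IsSphere (X : SSet) {K : ℕ} (c : Fin (K + 3) → X _⦋K + 1⦌) : Prop :=
  ∀ i j : Fin (K + 2), i ≤ j →
    X.map (SimplexCategory.δ i).op (c j.succ) = X.map (SimplexCategory.δ j).op (c i.castSucc)

/-- `y` fills the sphere `c` when `y δᵢ = cᵢ` for all `i`. -/
def IsFiller (X : SSet) {K : ℕ} (y : X _⦋K + 2⦌) (c : Fin (K + 3) → X _⦋K + 1⦌) : Prop :=
  ∀ i : Fin (K + 3), X.map (SimplexCategory.δ i).op y = c i

end AufhebungSSet

lemma SimplexCategory.exists_epi_mono_factorization {a b : ℕ} (f : ⦋a⦌ ⟶ ⦋b⦌) :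
    ∃ (l : ℕ) (e : ⦋a⦌ ⟶ ⦋l⦌) (m : ⦋l⦌ ⟶ ⦋b⦌), Epi e ∧ Mono m ∧ e ≫ m = f := by
  obtain ⟨fac⟩ := Limits.HasStrongEpiMonoFactorisations.has_fac f
  exact ⟨fac.I.len, fac.e, fac.m, fac.e_strong_epi.epi, fac.m_mono, fac.fac⟩

lemma Monotone.exists_apply_castSucc_eq_apply_succ {α : Type*} [PartialOrder α] {n : ℕ}
    {f : Fin (n + 2) → α} (hf : Monotone f) {a i : Fin (n + 2)} (hai : a ≠ i)
    (h : f a = f i) :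
    ∃ j : Fin (n + 1), (i = j.castSucc ∨ i = j.succ) ∧ f j.castSucc = f j.succ := by
  rcases hai.lt_or_gt with hlt | hgt
  · obtain ⟨j, rfl⟩ := Fin.exists_succ_eq.mpr (Fin.ne_zero_of_lt hlt)
    have hle : a ≤ j.castSucc := Fin.le_castSucc_iff.mpr hlt
    refine ⟨j, Or.inr rfl, le_antisymm (hf (Fin.castSucc_le_succ j)) ?_⟩
    exact h ▸ hf hle
  · obtain ⟨j, rfl⟩ := Fin.exists_castSucc_eq.mpr (Fin.ne_last_of_lt hgt)
    have hle : j.succ ≤ a := Fin.castSucc_lt_iff_succ_le.mp hgt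
    refine ⟨j, Or.inl rfl, le_antisymm (hf (Fin.castSucc_le_succ j)) ?_⟩
    exact h ▸ hf hle

namespace AufhebungSSet

open SimplexCategory

section Simplices

variable {X : SSet}

/-- By the Eilenberg–Zilber lemma, the dimension of the nondegenerate simplex underlying `x`. -/
noncomputable def minDim {n : ℕ} (x : X _⦋n⦌) : ℕ :=
  sInf {k | ∃ ε : (⦋n⦌ : SimplexCategory) ⟶ ⦋k⦌,
    Function.Surjective ε.toOrderHom ∧ ∃ y : X _⦋k⦌, x = X.map ε.op y}

lemma dgn_eq_sub_minDim {n : ℕ} (x : X _⦋n⦌) : dgn X x = n - minDim x := rfl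

lemma minDim_map_le_of_epi {n k : ℕ} (ε : ⦋n⦌ ⟶ ⦋k⦌) [Epi ε] (y : X _⦋k⦌) :
    minDim (X.map ε.op y) ≤ k :=
  Nat.sInf_le ⟨ε, epi_iff_surjective.mp ‹_›, y, rfl⟩

lemma minDim_le {n : ℕ} (x : X _⦋n⦌) : minDim x ≤ n := by
  simpa using minDim_map_le_of_epi (X := X) (𝟙 ⦋n⦌) x

lemma exists_epi_eq_map_minDim {n : ℕ} (x : X _⦋n⦌) :
    ∃ (ε : ⦋n⦌ ⟶ ⦋minDim x⦌) (y : X _⦋minDim x⦌), Epi ε ∧ x = X.map ε.op y := by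
  obtain ⟨ε, hε, y, hy⟩ := Nat.sInf_mem (s := {k | ∃ ε : (⦋n⦌ : SimplexCategory) ⟶ ⦋k⦌,
    Function.Surjective ε.toOrderHom ∧ ∃ y : X _⦋k⦌, x = X.map ε.op y})
    ⟨n, 𝟙 _, fun b ↦ ⟨b, rfl⟩, x, by simp⟩
  exact ⟨ε, y, epi_iff_surjective.mpr hε, hy⟩

lemma minDim_map_lt_of_not_epi {n k : ℕ} (f : ⦋n⦌ ⟶ ⦋k⦌) (hf : ¬ Epi f) (y : X _⦋k⦌) :
    minDim (X.map f.op y) < k := by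
  obtain ⟨l, e, m, he, hm, rfl⟩ := exists_epi_mono_factorization f
  have hlk : l ≤ k := le_of_mono m
  have hne : l ≠ k := by
    rintro rfl
    obtain rfl : m = 𝟙 _ := eq_id_of_mono m
    exact hf (by simpa using he)
  calc minDim (X.map (e ≫ m).op y) = minDim (X.map e.op (X.map m.op y)) := by
        rw [op_comp, Functor.map_comp_apply]
    _ ≤ l := minDim_map_le_of_epi e _
    _ < k := lt_of_le_of_ne hlk hne

lemma minDim_map_le_minDim {n m : ℕ} (τ : ⦋m⦌ ⟶ ⦋n⦌) (x : X _⦋n⦌) :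
    minDim (X.map τ.op x) ≤ minDim x := by
  obtain ⟨ε, y, _, hy⟩ := exists_epi_eq_map_minDim x
  have hτx : X.map (τ ≫ ε).op y = X.map τ.op x := by rw [op_comp, Functor.map_comp_apply, ← hy]
  rw [← hτx]
  by_cases hτε : Epi (τ ≫ ε)
  · exact minDim_map_le_of_epi _ y
  · exact (minDim_map_lt_of_not_epi _ hτε y).le

lemma reduces_iff_minDim_eq {n : ℕ} (i : Fin (n + 2)) (x : X _⦋n + 1⦌) :
    Reduces X i x ↔ minDim (X.map (δ i).op x) = minDim x := by
  have := minDim_le (X.map (δ i).op x)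
  have := minDim_le x
  rw [Reduces, dgn_eq_sub_minDim, dgn_eq_sub_minDim]
  omega

lemma reduces_of_eq_map_σ_map_δ {n : ℕ} {i : Fin (n + 2)} {j : Fin (n + 1)} {x : X _⦋n + 1⦌}
    (hx : x = X.map (σ j).op (X.map (δ i).op x)) : Reduces X i x := by
  refine (reduces_iff_minDim_eq i x).mpr (le_antisymm (minDim_map_le_minDim _ x) ?_)
  conv_lhs => rw [hx]
  exact minDim_map_le_minDim _ _

lemma eq_map_σ_map_δ_of_reduces {n : ℕ} {i : Fin (n + 2)} {x : X _⦋n + 1⦌}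
    (hi : Reduces X i x) :
    ∃ j : Fin (n + 1), (i = j.castSucc ∨ i = j.succ) ∧
      x = X.map (σ j).op (X.map (δ i).op x) := by
  obtain ⟨ε, y, _, hy⟩ := exists_epi_eq_map_minDim x
  have hδε : Epi (δ i ≫ ε) := by
    by_contra hδε
    have := minDim_map_lt_of_not_epi _ hδε y
    rw [op_comp, Functor.map_comp_apply, ← hy, (reduces_iff_minDim_eq i x).mp hi] at this
    exact this.false
  obtain ⟨b, hb⟩ := epi_iff_surjective.mp hδε (ε.toOrderHom i)
  obtain ⟨j, hij, hj⟩ := ε.toOrderHom.monotone.exists_apply_castSucc_eq_apply_succ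
    (Fin.succAbove_ne i b) hb
  obtain ⟨θ, rfl⟩ := eq_σ_comp_of_not_injective' ε j hj
  have hδσ : δ i ≫ σ j = 𝟙 _ := hij.elim δ_comp_σ_self' δ_comp_σ_succ'
  refine ⟨j, hij, ?_⟩
  simp only [hy, ← Functor.map_comp_apply, ← op_comp, ← Category.assoc, hδσ,
    Category.id_comp]

end Simplices

/-- `i` reduces `x` if and only if `x = x δᵢ σᵢ` (when `i ≤ n-1`) or
`x = x δᵢ σ_{i-1}` (when `i ≥ 1`). -/
theorem reduces_iff (X : SSet) (n : ℕ) (x : X _⦋n + 1⦌) (i : Fin (n + 2)) :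
    Reduces X i x ↔
      ((∃ h : (i : ℕ) < n + 1,
          x = X.map (SimplexCategory.σ ⟨(i : ℕ), h⟩).op (X.map (SimplexCategory.δ i).op x)) ∨
       (∃ _ : 0 < (i : ℕ),
          x = X.map (SimplexCategory.σ ⟨(i : ℕ) - 1, by have := i.isLt; omega⟩).op
            (X.map (SimplexCategory.δ i).op x))) := by
  refine ⟨fun hi ↦ ?_, ?_⟩
  · obtain ⟨j, rfl | rfl, hx⟩ := eq_map_σ_map_δ_of_reduces hi
    · exact Or.inl ⟨j.isLt, hx⟩
    · exact Or.inr ⟨j.succ_pos, hx⟩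
  · rintro (⟨_, hx⟩ | ⟨_, hx⟩) <;> exact reduces_of_eq_map_σ_map_δ hx

end AufhebungSSet
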